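/- arXiv:2501.12969 — 5 statements merged into one kernel-verified Lean document; each statement's English description precedes it below -/
import Mathlib

section
/- (Single-constraint Lipschitz-only safety, LoSBO case of Proposition 1.) Let g be an L-Lipschitz function from a real normed vector space V to ℝ, let E ≥ 0 be a noise bound, and let S₀ ⊆ V satisfy g(θ) ≥ 0 for all θ ∈ S₀. Suppose a sequence of queries (θₙ)ₙ≥0 and noisy observations yₙ = g(θₙ) + εₙ with |εₙ| ≤ E is given, where the safe sets are defined recursively by Sₙ₊₁ = Sₙ ∪ {θ' ∈ V : yₙ − E − L‖θₙ − θ'‖ ≥ 0} and each query satisfies θₙ ∈ Sₙ. Then for every n ≥ 0 and every θ ∈ Sₙ we have g(θ) ≥ 0; in particular g(θₙ) ≥ 0 for all n. -/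
/-! A point certified at step `n` satisfies `g θ' ≥ g(θₙ) - L‖θₙ - θ'‖ ≥ yₙ - E - L‖θₙ - θ'‖ ≥ 0`
by the Lipschitz bound and the noise bound, so each enlargement of the safe set adds only safe
points; induction on `n` then keeps every `Sₙ` inside `{g ≥ 0}`. -/

theorem subset_of_succ_eq_union {α : Type*} {P : Set α} {S T : ℕ → Set α} (h0 : S 0 ⊆ P)
    (hT : ∀ n, T n ⊆ P) (hrec : ∀ n, S (n + 1) = S n ∪ T n) : ∀ n, S n ⊆ P
  | 0 => h0
  | n + 1 => hrec n ▸ Set.union_subset (subset_of_succ_eq_union h0 hT hrec n) (hT n)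

theorem certified_set_subset_nonneg {V : Type*} [SeminormedAddCommGroup V] {g : V → ℝ}
    {L E ε y : ℝ} {θ : V} (hLip : ∀ a b : V, |g a - g b| ≤ L * ‖a - b‖)
    (hy : y = g θ + ε) (hε : |ε| ≤ E) :
    {θ' : V | y - E - L * ‖θ - θ'‖ ≥ 0} ⊆ {x | g x ≥ 0} := by
  intro x (hx : y - E - L * ‖θ - x‖ ≥ 0)
  have hg : g θ - g x ≤ L * ‖θ - x‖ := (abs_le.mp (hLip θ x)).2
  have hεE : ε ≤ E := (abs_le.mp hε).2
  show g x ≥ 0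
  linarith

theorem losbo_safety_general {V : Type*} [NormedAddCommGroup V]
    (g : V → ℝ) (L E : ℝ)
    (hLip : ∀ a b : V, |g a - g b| ≤ L * ‖a - b‖)
    (S : ℕ → Set V) (θ : ℕ → V) (ε y : ℕ → ℝ)
    (hS0 : ∀ x ∈ S 0, g x ≥ 0)
    (hy : ∀ n, y n = g (θ n) + ε n)
    (hε : ∀ n, |ε n| ≤ E)
    (hquery : ∀ n, θ n ∈ S n)
    (hrec : ∀ n, S (n + 1) = S n ∪ {θ' : V | y n - E - L * ‖θ n - θ'‖ ≥ 0}) :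
    (∀ n, ∀ x ∈ S n, g x ≥ 0) ∧ (∀ n, g (θ n) ≥ 0) := by
  have hsafe : ∀ n, S n ⊆ {x | g x ≥ 0} :=
    subset_of_succ_eq_union hS0 (fun n => certified_set_subset_nonneg hLip (hy n) (hε n)) hrec
  exact ⟨hsafe, fun n => hsafe n (hquery n)⟩

/-- Single-constraint Lipschitz-only safety (LoSBO case of
Proposition 1). All points in every safe set `Sₙ` are safe, in particular all
queried parameters are safe. -/
theorem losbo_safety {V : Type*} [NormedAddCommGroup V] [NormedSpace ℝ V]
    (g : V → ℝ) (L E : ℝ) (hL : 0 ≤ L) (hE : 0 ≤ E)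
    (hLip : ∀ a b : V, |g a - g b| ≤ L * ‖a - b‖)
    (S : ℕ → Set V) (θ : ℕ → V) (ε y : ℕ → ℝ)
    (hS0 : ∀ x ∈ S 0, g x ≥ 0)
    (hy : ∀ n, y n = g (θ n) + ε n)
    (hε : ∀ n, |ε n| ≤ E)
    (hquery : ∀ n, θ n ∈ S n)
    (hrec : ∀ n, S (n + 1) = S n ∪ {θ' : V | y n - E - L * ‖θ n - θ'‖ ≥ 0}) :
    (∀ n, ∀ x ∈ S n, g x ≥ 0) ∧ (∀ n, g (θ n) ≥ 0) :=
  losbo_safety_general g L E hLip S θ ε y hS0 hy hε hquery hrec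
end

section
/- (Proposition 1: safety of MCLoSBO.) Let q ≥ 1 and for each i ∈ {1,…,q} let gᵢ be an Lᵢ-Lipschitz function from a real normed vector space V to ℝ with noise bound Eᵢ ≥ 0. Let S₀ ⊆ V satisfy gᵢ(θ) ≥ 0 for all i and all θ ∈ S₀. Suppose a sequence of queries (θₙ)ₙ≥0 and noisy observations yᵢ,ₙ = gᵢ(θₙ) + εᵢ,ₙ with |εᵢ,ₙ| ≤ Eᵢ is given, where the safe sets are defined recursively by Sₙ₊₁ = Sₙ ∪ (⋂ᵢ₌₁..q {θ' ∈ V : yᵢ,ₙ − Eᵢ − Lᵢ‖θₙ − θ'‖ ≥ 0}) and each query satisfies θₙ ∈ Sₙ. Then for every n ≥ 0, every θ ∈ Sₙ, and every i ∈ {1,…,q}, we have gᵢ(θ) ≥ 0; in particular gᵢ(θₙ) ≥ 0 for all i and n. -/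
theorem add_sub_sub_mul_norm_le {V : Type*} [SeminormedAddCommGroup V] {f : V → ℝ}
    {L E ε : ℝ} {a b : V} (hLip : |f a - f b| ≤ L * ‖a - b‖) (hε : |ε| ≤ E) :
    f a + ε - E - L * ‖a - b‖ ≤ f b := by
  linarith [le_abs_self (f a - f b), le_abs_self ε]

theorem mclosbo_safety_general {V : Type*} [NormedAddCommGroup V] [NormedSpace ℝ V]
    (q : ℕ)
    (g : Fin q → V → ℝ) (L E : Fin q → ℝ)
    (hLip : ∀ i, ∀ a b : V, |g i a - g i b| ≤ L i * ‖a - b‖)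
    (S : ℕ → Set V) (θ : ℕ → V) (ε y : Fin q → ℕ → ℝ)
    (hS0 : ∀ i, ∀ x ∈ S 0, g i x ≥ 0)
    (hy : ∀ i n, y i n = g i (θ n) + ε i n)
    (hε : ∀ i n, |ε i n| ≤ E i)
    (hquery : ∀ n, θ n ∈ S n)
    (hrec : ∀ n, S (n + 1) =
      S n ∪ ⋂ i : Fin q, {θ' : V | y i n - E i - L i * ‖θ n - θ'‖ ≥ 0}) :
    (∀ n, ∀ x ∈ S n, ∀ i, g i x ≥ 0) ∧ (∀ n, ∀ i, g i (θ n) ≥ 0) := by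
  have safe : ∀ n, ∀ x ∈ S n, ∀ i, g i x ≥ 0 := by
    intro n
    induction n with
    | zero => exact fun x hx i => hS0 i x hx
    | succ n ih =>
      intro x hx i
      rw [hrec n] at hx
      rcases hx with hx_old | hx_new
      · exact ih x hx_old i
      · have hcertified : y i n - E i - L i * ‖θ n - x‖ ≥ 0 := Set.mem_iInter.mp hx_new i
        rw [hy] at hcertified
        linarith [add_sub_sub_mul_norm_le (hLip i (θ n) x) (hε i n)]
  exact ⟨safe, fun n i => safe n (θ n) (hquery n) i⟩

/-- Proposition 1: safety of MCLoSBO: with `q ≥ 1` constraints,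
all points in every safe set `Sₙ` satisfy every constraint, in particular all
queried parameters are safe for every constraint. -/
theorem mclosbo_safety {V : Type*} [NormedAddCommGroup V] [NormedSpace ℝ V]
    (q : ℕ) (hq : 1 ≤ q)
    (g : Fin q → V → ℝ) (L E : Fin q → ℝ)
    (hL : ∀ i, 0 ≤ L i) (hE : ∀ i, 0 ≤ E i)
    (hLip : ∀ i, ∀ a b : V, |g i a - g i b| ≤ L i * ‖a - b‖)
    (S : ℕ → Set V) (θ : ℕ → V) (ε y : Fin q → ℕ → ℝ)
    (hS0 : ∀ i, ∀ x ∈ S 0, g i x ≥ 0)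
    (hy : ∀ i n, y i n = g i (θ n) + ε i n)
    (hε : ∀ i n, |ε i n| ≤ E i)
    (hquery : ∀ n, θ n ∈ S n)
    (hrec : ∀ n, S (n + 1) =
      S n ∪ ⋂ i : Fin q, {θ' : V | y i n - E i - L i * ‖θ n - θ'‖ ≥ 0}) :
    (∀ n, ∀ x ∈ S n, ∀ i, g i x ≥ 0) ∧ (∀ n, ∀ i, g i (θ n) ≥ 0) :=
  mclosbo_safety_general q g L E hLip S θ ε y hS0 hy hε hquery hrec
end

section
/- (Induction step of Proposition 1.) Let q ≥ 1 and for each i ∈ {1,…,q} let gᵢ be an Lᵢ-Lipschitz function from a real normed vector space V to ℝ with noise bound Eᵢ ≥ 0. Let S ⊆ V be a set with gᵢ(θ) ≥ 0 for all i and all θ ∈ S, let θ̄ ∈ S, and let yᵢ = gᵢ(θ̄) + εᵢ be noisy observations with |εᵢ| ≤ Eᵢ. Then the enlarged set S ∪ (⋂ᵢ₌₁..q {θ' ∈ V : yᵢ − Eᵢ − Lᵢ‖θ̄ − θ'‖ ≥ 0}) also satisfies gᵢ(θ) ≥ 0 for all i and all its elements θ. -/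
theorem sub_sub_mul_norm_le_of_abs_sub_le {V : Type*} [SeminormedAddGroup V] {g : V → ℝ}
    {L E ε : ℝ} {a b : V} (hLip : |g a - g b| ≤ L * ‖a - b‖) (hε : |ε| ≤ E) :
    g a + ε - E - L * ‖a - b‖ ≤ g b := by
  linarith [(abs_le.mp hLip).2, (abs_le.mp hε).2]

theorem mclosbo_induction_step_general {V : Type*} [NormedAddCommGroup V]
    (q : ℕ)
    (g : Fin q → V → ℝ) (L E : Fin q → ℝ)
    (hLip : ∀ i, ∀ a b : V, |g i a - g i b| ≤ L i * ‖a - b‖)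
    (S : Set V) (hS : ∀ i, ∀ x ∈ S, g i x ≥ 0)
    (θbar : V)
    (ε y : Fin q → ℝ)
    (hy : ∀ i, y i = g i θbar + ε i)
    (hε : ∀ i, |ε i| ≤ E i) :
    ∀ x ∈ S ∪ ⋂ i : Fin q, {θ' : V | y i - E i - L i * ‖θbar - θ'‖ ≥ 0},
      ∀ i, g i x ≥ 0 := by
  rintro x (hxS | hxCert) i
  · exact hS i x hxS
  · have hcert : 0 ≤ y i - E i - L i * ‖θbar - x‖ := Set.mem_iInter.mp hxCert i
    rw [hy i] at hcert
    exact hcert.trans (sub_sub_mul_norm_le_of_abs_sub_le (hLip i θbar x) (hε i))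

/-- Induction step of Proposition 1: if `S` is safe for all
constraints and `θ̄ ∈ S` with noisy observations `yᵢ = gᵢ θ̄ + εᵢ`, `|εᵢ| ≤ Eᵢ`,
then the enlarged set `S ∪ ⋂ᵢ {θ' | yᵢ − Eᵢ − Lᵢ‖θ̄ − θ'‖ ≥ 0}` is also safe. -/
theorem mclosbo_induction_step {V : Type*} [NormedAddCommGroup V] [NormedSpace ℝ V]
    (q : ℕ) (hq : 1 ≤ q)
    (g : Fin q → V → ℝ) (L E : Fin q → ℝ)
    (hL : ∀ i, 0 ≤ L i) (hE : ∀ i, 0 ≤ E i)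
    (hLip : ∀ i, ∀ a b : V, |g i a - g i b| ≤ L i * ‖a - b‖)
    (S : Set V) (hS : ∀ i, ∀ x ∈ S, g i x ≥ 0)
    (θbar : V) (hθbar : θbar ∈ S)
    (ε y : Fin q → ℝ)
    (hy : ∀ i, y i = g i θbar + ε i)
    (hε : ∀ i, |ε i| ≤ E i) :
    ∀ x ∈ S ∪ ⋂ i : Fin q, {θ' : V | y i - E i - L i * ‖θbar - θ'‖ ≥ 0},
      ∀ i, g i x ≥ 0 :=
  mclosbo_induction_step_general q g L E hLip S hS θbar ε y hy hε
end

section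
/- (Soundness of the safe-set update of equation (5), multiple constraints.) Let q ≥ 1 and for each i ∈ {1,…,q} let gᵢ be an Lᵢ-Lipschitz function from a real normed vector space V to ℝ with noise bound Eᵢ ≥ 0. Let S ⊆ V, and suppose that for each θ̄ ∈ S and each i there is a noisy observation yᵢ(θ̄) = gᵢ(θ̄) + εᵢ(θ̄) with |εᵢ(θ̄)| ≤ Eᵢ. Then the set S' := ⋂ᵢ₌₁..q ⋃_{θ̄ ∈ S} {θ' ∈ V : yᵢ(θ̄) − Eᵢ − Lᵢ‖θ̄ − θ'‖ ≥ 0} satisfies gᵢ(θ') ≥ 0 for every θ' ∈ S' and every i ∈ {1,…,q}. -/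
/-! A point `θ'` of the updated set lies, for each constraint, in the cone of some observed `θ̄`.
Lipschitz continuity gives `g θ' ≥ g θ̄ - L‖θ̄ - θ'‖`, the noise bound gives `g θ̄ ≥ y - E`,
and the cone condition says exactly that the resulting lower bound `y - E - L‖θ̄ - θ'‖` is
nonnegative. -/

theorem nonneg_of_mem_noisy_lipschitz_cone {V : Type*} [SeminormedAddGroup V] {f : V → ℝ}
    {L E y : ℝ} {a b : V} (hLip : |f a - f b| ≤ L * ‖a - b‖) (hobs : |y - f a| ≤ E)
    (hcone : y - E - L * ‖a - b‖ ≥ 0) : 0 ≤ f b := by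
  have hdrop : f a - f b ≤ L * ‖a - b‖ := (abs_le.mp hLip).2
  have hnoise : y - f a ≤ E := (abs_le.mp hobs).2
  linarith

theorem mclosbo_update_sound_general {V : Type*} [NormedAddCommGroup V]
    (q : ℕ)
    (g : Fin q → V → ℝ) (L E : Fin q → ℝ)
    (hLip : ∀ i, ∀ a b : V, |g i a - g i b| ≤ L i * ‖a - b‖)
    (S : Set V) (y ε : Fin q → V → ℝ)
    (hy : ∀ i, ∀ θbar ∈ S, y i θbar = g i θbar + ε i θbar)
    (hε : ∀ i, ∀ θbar ∈ S, |ε i θbar| ≤ E i) :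
    ∀ θ' ∈ ⋂ i : Fin q, ⋃ θbar ∈ S,
        {x : V | y i θbar - E i - L i * ‖θbar - x‖ ≥ 0},
      ∀ i, g i θ' ≥ 0 := by
  intro θ' hθ' i
  obtain ⟨θbar, hθbar, hcone⟩ := Set.mem_iUnion₂.mp (Set.mem_iInter.mp hθ' i)
  have hobs : |y i θbar - g i θbar| ≤ E i := by
    rw [hy i θbar hθbar, add_sub_cancel_left]
    exact hε i θbar hθbar
  exact nonneg_of_mem_noisy_lipschitz_cone (hLip i θbar θ') hobs hcone

/-- Soundness of the safe-set update of equation (5), multiple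
constraints: the intersection over constraints of the unions of noise-shrunk
Lipschitz cones consists only of points safe for every constraint. -/
theorem mclosbo_update_sound {V : Type*} [NormedAddCommGroup V] [NormedSpace ℝ V]
    (q : ℕ) (hq : 1 ≤ q)
    (g : Fin q → V → ℝ) (L E : Fin q → ℝ)
    (hL : ∀ i, 0 ≤ L i) (hE : ∀ i, 0 ≤ E i)
    (hLip : ∀ i, ∀ a b : V, |g i a - g i b| ≤ L i * ‖a - b‖)
    (S : Set V) (y ε : Fin q → V → ℝ)
    (hy : ∀ i, ∀ θbar ∈ S, y i θbar = g i θbar + ε i θbar)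
    (hε : ∀ i, ∀ θbar ∈ S, |ε i θbar| ≤ E i) :
    ∀ θ' ∈ ⋂ i : Fin q, ⋃ θbar ∈ S,
        {x : V | y i θbar - E i - L i * ‖θbar - x‖ ≥ 0},
      ∀ i, g i θ' ≥ 0 :=
  mclosbo_update_sound_general q g L E hLip S y ε hy hε
end

section
/- (Safety with respect to the objective under the LoSBO reduction.) Let f be an L-Lipschitz function from a real normed vector space V to ℝ with noise bound E ≥ 0, regarded as its own safety constraint (g₁ = f, q = 1). Let S₀ ⊆ V satisfy f(θ) ≥ 0 for all θ ∈ S₀, let queries θₙ ∈ Sₙ produce noisy observations yₙ = f(θₙ) + εₙ with |εₙ| ≤ E, and define Sₙ₊₁ = Sₙ ∪ {θ' ∈ V : yₙ − E − L‖θₙ − θ'‖ ≥ 0}. Then for any tuning factor β > 0 and any selection of queries from the sets of potential maximizers and expanders (which are subsets of Sₙ), all queried parameters satisfy f(θₙ) ≥ 0; more precisely, any sequence of queries with θₙ ∈ Sₙ for all n satisfies f(θₙ) ≥ 0 for all n. -/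
/-!
The observation `yₙ` overestimates `f θₙ` by at most `E`, so every `θ'` admitted at step `n`
satisfies `f θ' ≥ f θₙ - L ‖θₙ - θ'‖ ≥ yₙ - E - L ‖θₙ - θ'‖ ≥ 0`. By induction all safe sets
lie in `{f ≥ 0}`, and the queries are drawn from them.
-/

lemma nonneg_of_lipschitz_observation_margin {V : Type*} [NormedAddCommGroup V] {f : V → ℝ}
    {L E y : ℝ} {a b : V} (hLip : |f a - f b| ≤ L * ‖a - b‖) (hy : y ≤ f a + E)
    (hmargin : y - E - L * ‖a - b‖ ≥ 0) : f b ≥ 0 := by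
  linarith [(abs_le.mp hLip).2]

theorem losbo_objective_safety_general {V : Type*} [NormedAddCommGroup V]
    (f : V → ℝ) (L E : ℝ)
    (hLip : ∀ a b : V, |f a - f b| ≤ L * ‖a - b‖)
    (S : ℕ → Set V) (θ : ℕ → V) (ε y : ℕ → ℝ)
    (hS0 : ∀ x ∈ S 0, f x ≥ 0)
    (hy : ∀ n, y n = f (θ n) + ε n)
    (hε : ∀ n, |ε n| ≤ E)
    (hquery : ∀ n, θ n ∈ S n)
    (hrec : ∀ n, S (n + 1) = S n ∪ {θ' : V | y n - E - L * ‖θ n - θ'‖ ≥ 0}) :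
    ∀ n, f (θ n) ≥ 0 := by
  have hsafe : ∀ n, ∀ x ∈ S n, f x ≥ 0 := by
    intro n
    induction n with
    | zero => exact hS0
    | succ n ih =>
      intro x hx
      rw [hrec n] at hx
      rcases hx with hold | hnew
      · exact ih x hold
      · exact nonneg_of_lipschitz_observation_margin (hLip (θ n) x)
          ((hy n).trans_le (add_le_add_right (le_of_abs_le (hε n)) _)) hnew
  exact fun n => hsafe n (θ n) (hquery n)

/-- Safety w.r.t. the objective under the LoSBO reduction,
`g₁ = f`, `q = 1`: for any tuning factor `β > 0`, any sequence of queries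
with `θₙ ∈ Sₙ` (in particular queries chosen from the maximizer and expander
sets, which are subsets of `Sₙ`) satisfies `f (θₙ) ≥ 0` for all `n`. -/
theorem losbo_objective_safety {V : Type*} [NormedAddCommGroup V] [NormedSpace ℝ V]
    (f : V → ℝ) (L E : ℝ) (hL : 0 ≤ L) (hE : 0 ≤ E)
    (hLip : ∀ a b : V, |f a - f b| ≤ L * ‖a - b‖)
    (β : ℝ) (hβ : 0 < β)
    (S : ℕ → Set V) (θ : ℕ → V) (ε y : ℕ → ℝ)
    (hS0 : ∀ x ∈ S 0, f x ≥ 0)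
    (hy : ∀ n, y n = f (θ n) + ε n)
    (hε : ∀ n, |ε n| ≤ E)
    (hquery : ∀ n, θ n ∈ S n)
    (hrec : ∀ n, S (n + 1) = S n ∪ {θ' : V | y n - E - L * ‖θ n - θ'‖ ≥ 0}) :
    ∀ n, f (θ n) ≥ 0 :=
  losbo_objective_safety_general f L E hLip S θ ε y hS0 hy hε hquery hrec
end
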